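/- arXiv:2109.04033 — 2 statements merged into one kernel-verified Lean document; each statement's English description precedes it below -/
import Mathlib

section
/- The q×q matrix Φᵀ D (γP − I) Φ is nonsingular, where I denotes the S×S identity matrix. -/
/-!
Write `y = Φ v` and `⟨x, y⟩_D = ∑ₛ d s x s y s`. The quadratic form of `Φᵀ D (γP − I) Φ` at `v` is
`γ ⟨y, P y⟩_D − ⟨y, y⟩_D`. Averaging `2 y s y s' ≤ y s ^ 2 + y s' ^ 2` against the weights
`d s P s s'`, whose row sums are `d s` (stochasticity) and whose column sums are `d s'`
(stationarity), gives `⟨y, P y⟩_D ≤ ⟨y, y⟩_D`. Hence the form is at most `(γ − 1) ⟨y, y⟩_D < 0`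
for `v ≠ 0`, since full column rank makes `y ≠ 0`, and a matrix whose quadratic form vanishes
only at `0` has trivial kernel.
-/

open Matrix

theorem Matrix.isUnit_of_dotProduct_mulVec_ne_zero {K n : Type*} [Field K] [Fintype n]
    [DecidableEq n] {A : Matrix n n K} (h : ∀ v ≠ 0, v ⬝ᵥ A *ᵥ v ≠ 0) : IsUnit A := by
  rw [isUnit_iff_isUnit_det, isUnit_iff_ne_zero, Ne, ← exists_mulVec_eq_zero_iff]
  rintro ⟨v, hv, hAv⟩
  exact h v hv (by rw [hAv, dotProduct_zero])

theorem Matrix.dotProduct_transpose_mul_mul_mulVec {R m n : Type*} [CommSemiring R]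
    [Fintype m] [Fintype n] (A : Matrix m m R) (B : Matrix m n R) (v : n → R) :
    v ⬝ᵥ (Bᵀ * A * B) *ᵥ v = (B *ᵥ v) ⬝ᵥ A *ᵥ (B *ᵥ v) := by
  rw [← mulVec_mulVec, ← mulVec_mulVec, dotProduct_mulVec, vecMul_transpose]

theorem Matrix.mulVec_injective_of_rank_eq_card {K m n : Type*} [Field K] [Fintype n]
    {A : Matrix m n K} (h : A.rank = Fintype.card n) : Function.Injective A.mulVec :=
  mulVec_injective_iff.mpr <| linearIndependent_iff_card_eq_finrank_span.mpr <| by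
    rw [← h]; exact A.rank_eq_finrank_span_cols

section

variable {R : Type*} [CommRing R] [LinearOrder R] [IsStrictOrderedRing R]
  {S : Type*} [Fintype S] [DecidableEq S]

theorem dotProduct_diagonal_mul_mulVec_le_of_stationary {P : Matrix S S R} {d : S → R}
    (hP0 : ∀ i j, 0 ≤ P i j) (hP1 : ∀ i, ∑ j, P i j = 1) (hd : ∀ s, 0 ≤ d s)
    (hstat : ∀ s', ∑ s, d s * P s s' = d s') (y : S → R) :
    y ⬝ᵥ (diagonal d * P) *ᵥ y ≤ y ⬝ᵥ diagonal d *ᵥ y := by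
  have hamgm (s s' : S) :
      2 * (d s * P s s' * y s * y s') ≤ d s * P s s' * y s ^ 2 + d s * P s s' * y s' ^ 2 := by
    nlinarith [mul_nonneg (mul_nonneg (hd s) (hP0 s s')) (sq_nonneg (y s - y s'))]
  have hrows : ∑ s, ∑ s', d s * P s s' * y s ^ 2 = ∑ s, d s * y s ^ 2 := by
    refine Finset.sum_congr rfl fun s _ => ?_
    rw [← Finset.sum_mul, ← Finset.mul_sum, hP1, mul_one]
  have hcols : ∑ s, ∑ s', d s * P s s' * y s' ^ 2 = ∑ s, d s * y s ^ 2 := by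
    rw [Finset.sum_comm]
    refine Finset.sum_congr rfl fun s' _ => ?_
    rw [← Finset.sum_mul, hstat]
  have hsum : 2 * ∑ s, ∑ s', d s * P s s' * y s * y s' ≤ 2 * ∑ s, d s * y s ^ 2 := by
    calc 2 * ∑ s, ∑ s', d s * P s s' * y s * y s'
        = ∑ s, ∑ s', 2 * (d s * P s s' * y s * y s') := by simp only [Finset.mul_sum]
      _ ≤ ∑ s, ∑ s', (d s * P s s' * y s ^ 2 + d s * P s s' * y s' ^ 2) :=
        Finset.sum_le_sum fun s _ => Finset.sum_le_sum fun s' _ => hamgm s s'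
      _ = 2 * ∑ s, d s * y s ^ 2 := by
        simp only [Finset.sum_add_distrib, hrows, hcols, two_mul]
  have hlhs : y ⬝ᵥ (diagonal d * P) *ᵥ y = ∑ s, ∑ s', d s * P s s' * y s * y s' := by
    simp only [dotProduct, mulVec, diagonal_mul, Finset.mul_sum]
    exact Finset.sum_congr rfl fun s _ => Finset.sum_congr rfl fun s' _ => by ring
  have hrhs : y ⬝ᵥ diagonal d *ᵥ y = ∑ s, d s * y s ^ 2 := by
    simp only [dotProduct, mulVec_diagonal]
    exact Finset.sum_congr rfl fun s _ => by ring
  rw [hlhs, hrhs]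
  exact le_of_mul_le_mul_left hsum two_pos

end

theorem dotProduct_diagonal_mul_smul_sub_one_mulVec_neg {S : Type*} [Fintype S]
    [DecidableEq S] {P : Matrix S S ℝ} {d : S → ℝ}
    (hP0 : ∀ i j, 0 ≤ P i j) (hP1 : ∀ i, ∑ j, P i j = 1) (hd : ∀ s, 0 < d s)
    (hstat : ∀ s', ∑ s, d s * P s s' = d s') {γ : ℝ} (hγ0 : 0 < γ) (hγ1 : γ < 1)
    {y : S → ℝ} (hy : y ≠ 0) :
    y ⬝ᵥ (diagonal d * (γ • P - 1)) *ᵥ y < 0 := by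
  have hle := dotProduct_diagonal_mul_mulVec_le_of_stationary hP0 hP1 (fun s => (hd s).le)
    hstat y
  have hpos : 0 < y ⬝ᵥ diagonal d *ᵥ y := by
    simpa using (PosDef.diagonal hd).dotProduct_mulVec_pos hy
  rw [mul_sub, mul_one, sub_mulVec, Matrix.mul_smul, smul_mulVec, dotProduct_sub, dotProduct_smul,
    smul_eq_mul]
  nlinarith

theorem stmt_5_general {S : Type*} [Fintype S] [DecidableEq S]
    (q : ℕ)
    (P : Matrix S S ℝ)
    (hP0 : ∀ i j, 0 ≤ P i j) (hP1 : ∀ i, ∑ j, P i j = 1)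
    (d : S → ℝ) (hd : ∀ s, 0 < d s)
    (hstat : ∀ s', ∑ s, d s * P s s' = d s')
    (γ : ℝ) (hγ0 : 0 < γ) (hγ1 : γ < 1)
    (Φ : Matrix S (Fin q) ℝ) (hΦ : Φ.rank = q) :
    IsUnit (Φᵀ * Matrix.diagonal d * (γ • P - 1) * Φ) := by
  have hΦinj : Function.Injective Φ.mulVec :=
    mulVec_injective_of_rank_eq_card (hΦ.trans (Fintype.card_fin q).symm)
  refine isUnit_of_dotProduct_mulVec_ne_zero fun v hv => ?_
  have hΦv : Φ *ᵥ v ≠ 0 := fun h => hv (hΦinj (h.trans (mulVec_zero Φ).symm))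
  rw [Matrix.mul_assoc Φᵀ, dotProduct_transpose_mul_mul_mulVec]
  exact (dotProduct_diagonal_mul_smul_sub_one_mulVec_neg hP0 hP1 hd hstat hγ0 hγ1 hΦv).ne

/-- The matrix `Φᵀ D (γP − I) Φ` is nonsingular, where `P` is row-stochastic,
`d` is a positive stationary distribution of `P`, `γ ∈ (0,1)`, and `Φ` has full
column rank. -/
theorem stmt_5 {S : Type*} [Fintype S] [DecidableEq S] [Nonempty S]
    (q : ℕ) (hq : 0 < q)
    (P : Matrix S S ℝ)
    (hP0 : ∀ i j, 0 ≤ P i j) (hP1 : ∀ i, ∑ j, P i j = 1)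
    (d : S → ℝ) (hd : ∀ s, 0 < d s)
    (hstat : ∀ s', ∑ s, d s * P s s' = d s')
    (γ : ℝ) (hγ0 : 0 < γ) (hγ1 : γ < 1)
    (Φ : Matrix S (Fin q) ℝ) (hΦ : Φ.rank = q) :
    IsUnit (Φᵀ * Matrix.diagonal d * (γ • P - 1) * Φ) :=
  stmt_5_general q P hP0 hP1 d hd hstat γ hγ0 hγ1 Φ hΦ
end

section
/- Assume A := Φᵀ D (γP − I) Φ is nonsingular, let B := Φᵀ D Φ, let σ ≥ 0, and set E := B (Aᵀ)⁻¹ B. Consider the Lagrangian L(θ,λ) := (σ/2) θᵀ B θ + λᵀ Φᵀ D (R + γPΦθ − Φθ) − (1/2) λᵀ B λ. Then the stationarity system ∇_θ L(θ,λ) = σ B θ + Aᵀ λ = 0 and ∇_λ L(θ,λ) = Φᵀ D R + A θ − B λ = 0 has a unique solution (θ,λ), and its θ-component equals θ̂_σ := −(A + σE)⁻¹ Φᵀ D R (in particular A + σE is invertible). -/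
/-! Since `Φ` has full column rank and `d > 0`, `B = Φᵀ D Φ` is positive definite. Eliminating
`λ = -σ A⁻ᵀ B θ` with the first stationarity equation turns the second into `(A + σE) θ = -Φᵀ D R`.
If `(A + σE) x = 0`, pairing with `y = A⁻ᵀ B x` gives `xᵀ B x + σ yᵀ B y = 0`, so `x = 0`:
`A + σE` is invertible and the system has exactly one solution. -/

open Matrix

namespace Matrix

variable {m n K : Type*} [Fintype n]

theorem mulVec_injective_of_rank_eq_card_s16 [Fintype m] [Field K] {Φ : Matrix m n K}
    (hΦ : Φ.rank = Fintype.card n) : Function.Injective Φ.mulVec := by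
  have hker : Module.finrank K (LinearMap.ker Φ.mulVecLin) = 0 := by
    have := LinearMap.finrank_range_add_finrank_ker Φ.mulVecLin
    rw [Module.finrank_fintype_fun_eq_card] at this
    change Φ.rank + _ = _ at this
    omega
  rw [← coe_mulVecLin, ← LinearMap.ker_eq_bot]
  exact Submodule.finrank_eq_zero.mp hker

theorem posDef_transpose_mul_diagonal_mul [Fintype m] [DecidableEq m] {d : m → ℝ}
    (hd : ∀ i, 0 < d i) {Φ : Matrix m n ℝ} (hΦ : Function.Injective Φ.mulVec) :
    (Φᵀ * diagonal d * Φ).PosDef := by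
  simpa only [conjTranspose_eq_transpose_of_trivial] using
    (posDef_diagonal_iff.mpr hd).conjTranspose_mul_mul_same hΦ

variable [DecidableEq n]

theorem isUnit_add_smul_mul_inv_transpose_mul {A B : Matrix n n ℝ} (hA : IsUnit A)
    (hB : B.PosDef) {σ : ℝ} (hσ : 0 ≤ σ) : IsUnit (A + σ • (B * (Aᵀ)⁻¹ * B)) := by
  have hAT : Aᵀ * (Aᵀ)⁻¹ = 1 :=
    mul_nonsing_inv _ (isUnit_det_transpose A ((isUnit_iff_isUnit_det A).mp hA))
  rw [← mulVec_injective_iff_isUnit, ← coe_mulVecLin, injective_iff_map_eq_zero]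
  intro x hx
  by_contra hx0
  set y := (Aᵀ)⁻¹ *ᵥ (B *ᵥ x)
  have hpair :
      y ⬝ᵥ (A + σ • (B * (Aᵀ)⁻¹ * B)) *ᵥ x = x ⬝ᵥ B *ᵥ x + σ * (y ⬝ᵥ B *ᵥ y) := by
    have hATy : Aᵀ *ᵥ y = B *ᵥ x := by rw [mulVec_mulVec, hAT, one_mulVec]
    rw [add_mulVec, smul_mulVec, dotProduct_add, dotProduct_smul, smul_eq_mul,
      dotProduct_mulVec y A, ← mulVec_transpose, hATy, dotProduct_comm, ← mulVec_mulVec,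
      ← mulVec_mulVec]
  have hzero : y ⬝ᵥ (A + σ • (B * (Aᵀ)⁻¹ * B)) *ᵥ x = 0 := by
    rw [← coe_mulVecLin, hx, dotProduct_zero]
  have hpos : 0 < x ⬝ᵥ B *ᵥ x := by simpa using hB.dotProduct_mulVec_pos hx0
  have hnonneg : 0 ≤ y ⬝ᵥ B *ᵥ y := by simpa using hB.posSemidef.dotProduct_mulVec_nonneg y
  nlinarith [mul_nonneg hσ hnonneg]

theorem saddle_system_iff [CommRing K] {A B : Matrix n n K} (hA : IsUnit A) (σ : K)
    (c θ lam : n → K) :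
    (σ • (B *ᵥ θ) + Aᵀ *ᵥ lam = 0 ∧ c + A *ᵥ θ - B *ᵥ lam = 0) ↔
      (lam = -σ • ((Aᵀ)⁻¹ *ᵥ (B *ᵥ θ)) ∧ (A + σ • (B * (Aᵀ)⁻¹ * B)) *ᵥ θ = -c) := by
  have hAT : IsUnit Aᵀ.det := isUnit_det_transpose A ((isUnit_iff_isUnit_det A).mp hA)
  have hlam : σ • (B *ᵥ θ) + Aᵀ *ᵥ lam = 0 ↔ lam = -σ • ((Aᵀ)⁻¹ *ᵥ (B *ᵥ θ)) := by
    constructor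
    · intro h
      calc lam = (Aᵀ)⁻¹ *ᵥ (Aᵀ *ᵥ lam) := by
            rw [mulVec_mulVec, nonsing_inv_mul _ hAT, one_mulVec]
        _ = (Aᵀ)⁻¹ *ᵥ (-σ • (B *ᵥ θ)) := by congr 1; linear_combination (norm := module) h
        _ = -σ • ((Aᵀ)⁻¹ *ᵥ (B *ᵥ θ)) := mulVec_smul _ _ _
    · rintro rfl
      rw [mulVec_smul, mulVec_mulVec, mul_nonsing_inv _ hAT, one_mulVec]
      module
  rw [hlam, and_congr_right_iff]
  rintro rfl
  rw [add_mulVec, smul_mulVec, mulVec_smul, ← mulVec_mulVec, ← mulVec_mulVec]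
  constructor <;> intro h <;> linear_combination (norm := module) h

end Matrix

theorem stmt_16_general {S : Type*} [Fintype S] [DecidableEq S]
    (q : ℕ)
    (R : S → ℝ)
    (d : S → ℝ) (hd : ∀ s, 0 < d s)
    (Φ : Matrix S (Fin q) ℝ) (hΦ : Φ.rank = q)
    (A B E : Matrix (Fin q) (Fin q) ℝ)
    (hAunit : IsUnit A)
    (hB : B = Φᵀ * Matrix.diagonal d * Φ)
    (hE : E = B * (Aᵀ)⁻¹ * B)
    (σ : ℝ) (hσ : 0 ≤ σ) :
    IsUnit (A + σ • E) ∧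
    ∃ lam0 : Fin q → ℝ,
      (σ • (B *ᵥ (-((A + σ • E)⁻¹ *ᵥ ((Φᵀ * Matrix.diagonal d) *ᵥ R)))) + Aᵀ *ᵥ lam0 = 0 ∧
       (Φᵀ * Matrix.diagonal d) *ᵥ R +
         A *ᵥ (-((A + σ • E)⁻¹ *ᵥ ((Φᵀ * Matrix.diagonal d) *ᵥ R))) - B *ᵥ lam0 = 0) ∧
      ∀ θ lam : Fin q → ℝ,
        (σ • (B *ᵥ θ) + Aᵀ *ᵥ lam = 0 ∧
         (Φᵀ * Matrix.diagonal d) *ᵥ R + A *ᵥ θ - B *ᵥ lam = 0) →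
        θ = -((A + σ • E)⁻¹ *ᵥ ((Φᵀ * Matrix.diagonal d) *ᵥ R)) ∧ lam = lam0 := by
  have hΦinj : Function.Injective Φ.mulVec :=
    mulVec_injective_of_rank_eq_card_s16 (by rw [hΦ, Fintype.card_fin])
  have hBpos : B.PosDef := hB ▸ posDef_transpose_mul_diagonal_mul hd hΦinj
  subst hE
  have hM := isUnit_add_smul_mul_inv_transpose_mul hAunit hBpos hσ
  set c := (Φᵀ * Matrix.diagonal d) *ᵥ R
  set θ₀ := -((A + σ • (B * (Aᵀ)⁻¹ * B))⁻¹ *ᵥ c)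
  have hθ₀ : (A + σ • (B * (Aᵀ)⁻¹ * B)) *ᵥ θ₀ = -c := by
    rw [mulVec_neg, mulVec_mulVec, mul_nonsing_inv _ ((isUnit_iff_isUnit_det _).mp hM),
      one_mulVec]
  refine ⟨hM, -σ • ((Aᵀ)⁻¹ *ᵥ (B *ᵥ θ₀)), (saddle_system_iff hAunit σ c θ₀ _).mpr ⟨rfl, hθ₀⟩,
    fun θ lam h => ?_⟩
  obtain ⟨rfl, hθ⟩ := (saddle_system_iff hAunit σ c θ lam).mp h
  obtain rfl : θ = θ₀ := mulVec_injective_iff_isUnit.mpr hM (hθ.trans hθ₀.symm)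
  exact ⟨rfl, rfl⟩

/-- For the doubly regularized Lagrangian
`L(θ,λ) = (σ/2) θᵀ B θ + λᵀ Φᵀ D (R + γPΦθ − Φθ) − (1/2) λᵀ B λ` with `B = Φᵀ D Φ`,
`A = Φᵀ D (γP − I) Φ` nonsingular, `σ ≥ 0`, and `E = B (Aᵀ)⁻¹ B`, the stationarity
system `σ B θ + Aᵀ λ = 0`, `Φᵀ D R + A θ − B λ = 0` has a unique solution whose
`θ`-component is `θ̂_σ = −(A + σE)⁻¹ Φᵀ D R` (in particular `A + σE` is invertible). -/
theorem stmt_16 {S : Type*} [Fintype S] [DecidableEq S] [Nonempty S]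
    (q : ℕ) (hq : 0 < q)
    (P : Matrix S S ℝ) (γ : ℝ) (R : S → ℝ)
    (d : S → ℝ) (hd : ∀ s, 0 < d s)
    (Φ : Matrix S (Fin q) ℝ) (hΦ : Φ.rank = q)
    (A B E : Matrix (Fin q) (Fin q) ℝ)
    (hA : A = Φᵀ * Matrix.diagonal d * (γ • P - 1) * Φ)
    (hAunit : IsUnit A)
    (hB : B = Φᵀ * Matrix.diagonal d * Φ)
    (hE : E = B * (Aᵀ)⁻¹ * B)
    (σ : ℝ) (hσ : 0 ≤ σ) :
    IsUnit (A + σ • E) ∧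
    ∃ lam0 : Fin q → ℝ,
      (σ • (B *ᵥ (-((A + σ • E)⁻¹ *ᵥ ((Φᵀ * Matrix.diagonal d) *ᵥ R)))) + Aᵀ *ᵥ lam0 = 0 ∧
       (Φᵀ * Matrix.diagonal d) *ᵥ R +
         A *ᵥ (-((A + σ • E)⁻¹ *ᵥ ((Φᵀ * Matrix.diagonal d) *ᵥ R))) - B *ᵥ lam0 = 0) ∧
      ∀ θ lam : Fin q → ℝ,
        (σ • (B *ᵥ θ) + Aᵀ *ᵥ lam = 0 ∧
         (Φᵀ * Matrix.diagonal d) *ᵥ R + A *ᵥ θ - B *ᵥ lam = 0) →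
        θ = -((A + σ • E)⁻¹ *ᵥ ((Φᵀ * Matrix.diagonal d) *ᵥ R)) ∧ lam = lam0 :=
  stmt_16_general q R d hd Φ hΦ A B E hAunit hB hE σ hσ
end
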